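/- Derivation of the good-variable system for the power-law equation of state: Let κ > 0, p(ϱ) = ϱ^{κ+1}, and let (ϱ,u) be a C¹ solution of the relativistic Euler equations on an open set O ⊂ ℝ^{1+d} with ϱ > 0, u⁰ > 0, u^α u_α = −1, and (κ+1)ϱ^κ < 1. Define r = ((1+κ)/κ) ϱ^κ, f(ϱ) = (1+ϱ^κ)^{1+1/κ}, and v^i = f(ϱ) u^i for i = 1,…,d. Then with ⟨r⟩ = 1 + κr/(κ+1), v⁰ = √(⟨r⟩^{2+2/κ} + |v|²), a₀ = 1 − κ r |v|²/(v⁰)², a₁ = −2κ⟨r⟩^{2+2/κ}/((v⁰)³ a₀), a₂ = ⟨r⟩^{1+2/κ}/v⁰, G^{ij} = (κ⟨r⟩/(a₀ v⁰))(δ^{ij} − v^i v^j/(v⁰)²), and D_t = ∂_t + (v^i/v⁰)∂_i, the pair (r,v) satisfies on O: D_t r + r G^{ij} ∂_i v_j + r a₁ v^i ∂_i r = 0 and D_t v_i + a₂ ∂_i r = 0, and moreover v⁰ = f(ϱ) u⁰. -/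

import Mathlib

open Set

noncomputable section

/-- The diagonal entries of the Minkowski metric `m = diag(−1,1,…,1)` on `ℝ^{1+d}`. -/
def mlt (d : ℕ) (α : Fin (d + 1)) : ℝ := if α = 0 then -1 else 1

/-- Partial derivative `∂_μ` of a function on `ℝ^{1+d}`. -/
def pder (d : ℕ) (μ : Fin (d + 1)) (F : (Fin (d + 1) → ℝ) → ℝ) (q : Fin (d + 1) → ℝ) : ℝ :=
  fderiv ℝ F q (Pi.single μ 1)

/-- The relativistic Euler equations with equation of state `peos` on the set `O`:
`u^μ ∂_μ ϱ + (p+ϱ) ∂_μ u^μ = 0` and `(p+ϱ) u^μ ∂_μ u_α + Π^μ_α ∂_μ p = 0`, where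
`Π^μ_α = δ^μ_α + u^μ u_α` and indices are lowered with `m = diag(−1,1,…,1)`. -/
def RelEuler (d : ℕ) (peos : ℝ → ℝ) (O : Set (Fin (d + 1) → ℝ))
    (ϱ : (Fin (d + 1) → ℝ) → ℝ) (u : (Fin (d + 1) → ℝ) → Fin (d + 1) → ℝ) : Prop :=
  ∀ q ∈ O,
    ((∑ μ, u q μ * pder d μ ϱ q)
      + (peos (ϱ q) + ϱ q) * ∑ μ, pder d μ (fun z => u z μ) q = 0) ∧
    ∀ α, (peos (ϱ q) + ϱ q) * (∑ μ, u q μ * pder d μ (fun z => mlt d α * u z α) q)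
        + pder d α (fun z => peos (ϱ z)) q
        + mlt d α * u q α * ∑ μ, u q μ * pder d μ (fun z => peos (ϱ z)) q = 0

/-- `⟨r⟩ = 1 + κ r/(κ+1)`. -/
def brk (κ r : ℝ) : ℝ := 1 + κ * r / (κ + 1)

def normSq (d : ℕ) (v : Fin d → ℝ) : ℝ := ∑ i, v i ^ 2

/-- `v⁰ = √(⟨r⟩^{2+2/κ} + |v|²)`. -/
def v0 (d : ℕ) (κ r : ℝ) (v : Fin d → ℝ) : ℝ :=
  Real.sqrt (brk κ r ^ (2 + 2 / κ : ℝ) + normSq d v)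

/-- `a₀ = 1 - κ r |v|²/(v⁰)²`. -/
def a0c (d : ℕ) (κ r : ℝ) (v : Fin d → ℝ) : ℝ :=
  1 - κ * r * normSq d v / v0 d κ r v ^ 2

/-- `a₁ = -2κ⟨r⟩^{2+2/κ}/((v⁰)³ a₀)`. -/
def a1c (d : ℕ) (κ r : ℝ) (v : Fin d → ℝ) : ℝ :=
  -(2 * κ * brk κ r ^ (2 + 2 / κ : ℝ)) / (v0 d κ r v ^ 3 * a0c d κ r v)

/-- `a₂ = ⟨r⟩^{1+2/κ}/v⁰`. -/
def a2c (d : ℕ) (κ r : ℝ) (v : Fin d → ℝ) : ℝ :=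
  brk κ r ^ (1 + 2 / κ : ℝ) / v0 d κ r v

/-- `G^{ij} = (κ⟨r⟩/(a₀ v⁰))(δ^{ij} − v^i v^j/(v⁰)²)`. -/
def Gc (d : ℕ) (κ r : ℝ) (v : Fin d → ℝ) (i j : Fin d) : ℝ :=
  κ * brk κ r / (a0c d κ r v * v0 d κ r v) *
    ((if i = j then (1 : ℝ) else 0) - v i * v j / v0 d κ r v ^ 2)

/-- The good variable `r = ((1+κ)/κ) ϱ^κ`. -/
def rVar (d : ℕ) (κ : ℝ) (ϱ : (Fin (d + 1) → ℝ) → ℝ) (q : Fin (d + 1) → ℝ) : ℝ :=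
  (1 + κ) / κ * ϱ q ^ (κ : ℝ)

/-- `f(ϱ) = (1+ϱ^κ)^{1+1/κ}`. -/
def fκ (κ y : ℝ) : ℝ := (1 + y ^ (κ : ℝ)) ^ (1 + 1 / κ : ℝ)

/-- The good velocity variable `v^i = f(ϱ) u^i`. -/
def vVar (d : ℕ) (κ : ℝ) (ϱ : (Fin (d + 1) → ℝ) → ℝ)
    (u : (Fin (d + 1) → ℝ) → Fin (d + 1) → ℝ) (q : Fin (d + 1) → ℝ) : Fin d → ℝ :=
  fun i => fκ κ (ϱ q) * u q i.succ

/-! At each point the good-variable equations are linear combinations of the relativistic Euler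
equations. The chain rule expresses the derivatives of `r`, `p(ϱ)` and `f(ϱ) u^α` through those of
`ϱ` and `u`; the constraint `u^α u_α = -1` gives `v⁰ = f(ϱ) u⁰` (so `v^l / v⁰ = u^l / u⁰` and
`D_t = u^μ ∂_μ / u⁰`) and, differentiated, `u^l ∂_μ u^l = u⁰ ∂_μ u⁰`, which turns the contraction
with `G^{ij}` into a divergence and a material derivative of `u⁰`. The `v_i` equation is then
`f / ((p + ϱ) u⁰)` times the `i`-th momentum equation, and the `r` equation is
`(κ+1)ϱ^κ / (ϱ (u⁰)² a₀)` times `u⁰ · (mass equation) + (time component of the momentum equation)`;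
`a₀ > 0` because `c_s² = (κ+1)ϱ^κ < 1`. -/

open Filter Topology

section Calculus

variable {d : ℕ} {μ : Fin (d + 1)} {q : Fin (d + 1) → ℝ} {F G : (Fin (d + 1) → ℝ) → ℝ}

lemma pder_eq_of_hasFDerivAt {L : (Fin (d + 1) → ℝ) →L[ℝ] ℝ} (h : HasFDerivAt F L q) :
    pder d μ F q = L (Pi.single μ 1) := by
  rw [pder, h.fderiv]

lemma pder_mul (hF : DifferentiableAt ℝ F q) (hG : DifferentiableAt ℝ G q) :
    pder d μ (fun z => F z * G z) q = F q * pder d μ G q + G q * pder d μ F q := by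
  rw [pder_eq_of_hasFDerivAt (hF.hasFDerivAt.fun_mul hG.hasFDerivAt)]
  simp [pder]

lemma pder_comp {φ : ℝ → ℝ} {φ' : ℝ} (hφ : HasDerivAt φ φ' (F q)) (hF : DifferentiableAt ℝ F q) :
    pder d μ (fun z => φ (F z)) q = φ' * pder d μ F q := by
  have h : HasFDerivAt (fun z => φ (F z)) (φ' • fderiv ℝ F q) q :=
    hφ.comp_hasFDerivAt q hF.hasFDerivAt
  rw [pder_eq_of_hasFDerivAt h]
  simp [pder]

lemma pder_const_mul (c : ℝ) (hF : DifferentiableAt ℝ F q) :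
    pder d μ (fun z => c * F z) q = c * pder d μ F q := by
  simpa using pder_comp (μ := μ) ((hasDerivAt_id (F q)).const_mul c) hF

lemma pder_eq_zero_of_eventuallyEq_const {c : ℝ} (h : F =ᶠ[𝓝 q] fun _ => c) :
    pder d μ F q = 0 := by
  simp [pder, h.fderiv_eq]

lemma pder_sum {ι : Type*} (s : Finset ι) {H : ι → (Fin (d + 1) → ℝ) → ℝ}
    (hH : ∀ i ∈ s, DifferentiableAt ℝ (H i) q) :
    pder d μ (fun z => ∑ i ∈ s, H i z) q = ∑ i ∈ s, pder d μ (H i) q := by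
  simp [pder, fderiv_fun_sum hH]

lemma pder_zero_add_sum_div_mul (a : Fin (d + 1) → ℝ) (ha : a 0 ≠ 0)
    (F : (Fin (d + 1) → ℝ) → ℝ) :
    pder d 0 F q + ∑ l : Fin d, a l.succ / a 0 * pder d l.succ F q
      = (∑ μ, a μ * pder d μ F q) / a 0 := by
  rw [Fin.sum_univ_succ, add_div, Finset.sum_div, mul_div_cancel_left₀ _ ha]
  exact congrArg _ (Finset.sum_congr rfl fun l _ => by ring)

end Calculus

section Minkowski

variable {d : ℕ}

lemma mlt_zero : mlt d 0 = -1 := if_pos rfl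

lemma mlt_succ (i : Fin d) : mlt d i.succ = 1 := by simp [mlt, Fin.succ_ne_zero]

lemma sum_mlt_mul_mul (a b : Fin (d + 1) → ℝ) :
    ∑ α, mlt d α * a α * b α = -(a 0 * b 0) + ∑ l : Fin d, a l.succ * b l.succ := by
  simp [Fin.sum_univ_succ, mlt_zero, mlt_succ]

lemma sum_sq_succ_of_unit {U : Fin (d + 1) → ℝ} (h : ∑ α, mlt d α * U α * U α = -1) :
    ∑ l : Fin d, U l.succ ^ 2 = U 0 ^ 2 - 1 := by
  simp only [sum_mlt_mul_mul, sq] at h ⊢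
  linarith

lemma sum_mul_pder_succ_of_unit {u : (Fin (d + 1) → ℝ) → Fin (d + 1) → ℝ}
    {q : Fin (d + 1) → ℝ} (hu : ∀ α, DifferentiableAt ℝ (fun z => u z α) q)
    (hunit : ∀ᶠ z in 𝓝 q, ∑ α, mlt d α * u z α * u z α = -1) (μ : Fin (d + 1)) :
    ∑ l : Fin d, u q l.succ * pder d μ (fun z => u z l.succ) q
      = u q 0 * pder d μ (fun z => u z 0) q := by
  have h0 : pder d μ (fun z => ∑ α, mlt d α * u z α * u z α) q = 0 :=
    pder_eq_zero_of_eventuallyEq_const hunit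
  rw [pder_sum _ fun α _ => ((hu α).const_mul _).fun_mul (hu α)] at h0
  simp only [pder_mul ((hu _).const_mul _) (hu _), pder_const_mul _ (hu _)] at h0
  have h : 2 * ∑ α, mlt d α * u q α * pder d μ (fun z => u z α) q = 0 := by
    rw [Finset.mul_sum, ← h0]
    exact Finset.sum_congr rfl fun α _ => by ring
  rw [sum_mlt_mul_mul] at h
  linarith

end Minkowski

section PowerLaw

variable {κ : ℝ}

lemma fκ_pos {y : ℝ} (hy : 0 ≤ y) : 0 < fκ κ y :=
  Real.rpow_pos_of_pos (by positivity) _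

lemma hasDerivAt_fκ (hκ : κ ≠ 0) {y : ℝ} (hy : 0 < y) :
    HasDerivAt (fκ κ) (fκ κ y * ((κ + 1) * y ^ κ / (y * (1 + y ^ κ)))) y := by
  have hw : 0 < 1 + y ^ κ := by positivity
  have h : HasDerivAt (fκ κ) (κ * y ^ (κ - 1) * (1 + 1 / κ) * (1 + y ^ κ) ^ (1 + 1 / κ - 1)) y :=
    ((Real.hasDerivAt_rpow_const (Or.inl hy.ne')).const_add 1).rpow_const (Or.inl hw.ne')
  convert h using 1
  unfold fκ
  rw [add_sub_cancel_left, Real.rpow_add hw, Real.rpow_one, Real.rpow_sub_one hy.ne']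
  field_simp

lemma rpow_two_add_two_div {b : ℝ} (hb : 0 ≤ b) : b ^ (2 + 2 / κ) = (b ^ (1 + 1 / κ)) ^ 2 := by
  rw [← Real.rpow_mul_natCast hb]
  ring_nf

lemma rpow_one_add_two_div {b : ℝ} (hb : 0 < b) :
    b ^ (1 + 2 / κ) = (b ^ (1 + 1 / κ)) ^ 2 / b := by
  rw [eq_div_iff hb.ne', ← Real.rpow_add_one hb.ne', ← rpow_two_add_two_div hb.le]
  ring_nf

end PowerLaw

section GoodVariables

variable {d : ℕ} {κ : ℝ} {ϱ : (Fin (d + 1) → ℝ) → ℝ} {u : (Fin (d + 1) → ℝ) → Fin (d + 1) → ℝ}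
  {q : Fin (d + 1) → ℝ}

lemma brk_rVar (hκ : 0 < κ) : brk κ (rVar d κ ϱ q) = 1 + ϱ q ^ κ := by
  rw [brk, rVar]
  field_simp
  ring

lemma normSq_vVar (hunit : ∑ α, mlt d α * u q α * u q α = -1) :
    normSq d (vVar d κ ϱ u q) = fκ κ (ϱ q) ^ 2 * (u q 0 ^ 2 - 1) := by
  simp only [normSq, vVar, mul_pow]
  rw [← Finset.mul_sum, sum_sq_succ_of_unit hunit]

lemma v0_rVar_vVar (hκ : 0 < κ) (hρ : 0 ≤ ϱ q) (hU0 : 0 ≤ u q 0)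
    (hunit : ∑ α, mlt d α * u q α * u q α = -1) :
    v0 d κ (rVar d κ ϱ q) (vVar d κ ϱ u q) = fκ κ (ϱ q) * u q 0 := by
  rw [v0, brk_rVar hκ, rpow_two_add_two_div (by positivity), normSq_vVar hunit, ← fκ]
  rw [show fκ κ (ϱ q) ^ 2 + fκ κ (ϱ q) ^ 2 * (u q 0 ^ 2 - 1) = (fκ κ (ϱ q) * u q 0) ^ 2 by ring]
  exact Real.sqrt_sq (mul_nonneg (fκ_pos hρ).le hU0)

lemma vVar_div_v0 (hκ : 0 < κ) (hρ : 0 ≤ ϱ q) (hU0 : 0 < u q 0)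
    (hunit : ∑ α, mlt d α * u q α * u q α = -1) (l : Fin d) :
    vVar d κ ϱ u q l / v0 d κ (rVar d κ ϱ q) (vVar d κ ϱ u q) = u q l.succ / u q 0 := by
  rw [v0_rVar_vVar hκ hρ hU0.le hunit, vVar, mul_div_mul_left _ _ (fκ_pos hρ).ne']

lemma a0c_rVar_vVar (hκ : 0 < κ) (hρ : 0 ≤ ϱ q) (hU0 : 0 < u q 0)
    (hunit : ∑ α, mlt d α * u q α * u q α = -1) :
    a0c d κ (rVar d κ ϱ q) (vVar d κ ϱ u q)
      = (u q 0 ^ 2 - (κ + 1) * ϱ q ^ κ * (u q 0 ^ 2 - 1)) / u q 0 ^ 2 := by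
  have hf := (fκ_pos (κ := κ) hρ).ne'
  rw [a0c, normSq_vVar hunit, v0_rVar_vVar hκ hρ hU0.le hunit, rVar]
  field_simp
  ring

lemma a0c_rVar_vVar_pos (hκ : 0 < κ) (hρ : 0 ≤ ϱ q) (hU0 : 0 < u q 0)
    (hunit : ∑ α, mlt d α * u q α * u q α = -1) (hcs : (κ + 1) * ϱ q ^ κ < 1) :
    0 < a0c d κ (rVar d κ ϱ q) (vVar d κ ϱ u q) := by
  have hU0sq : 1 ≤ u q 0 ^ 2 := by
    have hspatial : 0 ≤ ∑ l : Fin d, u q l.succ ^ 2 := Finset.sum_nonneg fun l _ => sq_nonneg _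
    linarith [sum_sq_succ_of_unit hunit]
  rw [a0c_rVar_vVar hκ hρ hU0 hunit]
  exact div_pos (by nlinarith) (by positivity)

lemma a1c_rVar_vVar (hκ : 0 < κ) (hρ : 0 ≤ ϱ q) (hU0 : 0 < u q 0)
    (hunit : ∑ α, mlt d α * u q α * u q α = -1) :
    a1c d κ (rVar d κ ϱ q) (vVar d κ ϱ u q)
      = -(2 * κ) / (fκ κ (ϱ q) * u q 0 ^ 3 * a0c d κ (rVar d κ ϱ q) (vVar d κ ϱ u q)) := by
  rw [a1c, v0_rVar_vVar hκ hρ hU0.le hunit, brk_rVar hκ, rpow_two_add_two_div (by positivity),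
    ← fκ]
  field_simp

lemma a2c_rVar_vVar (hκ : 0 < κ) (hρ : 0 ≤ ϱ q) (hU0 : 0 < u q 0)
    (hunit : ∑ α, mlt d α * u q α * u q α = -1) :
    a2c d κ (rVar d κ ϱ q) (vVar d κ ϱ u q) = fκ κ (ϱ q) / ((1 + ϱ q ^ κ) * u q 0) := by
  rw [a2c, v0_rVar_vVar hκ hρ hU0.le hunit, brk_rVar hκ, rpow_one_add_two_div (by positivity),
    ← fκ]
  field_simp

lemma Gc_rVar_vVar (hκ : 0 < κ) (hρ : 0 ≤ ϱ q) (hU0 : 0 < u q 0)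
    (hunit : ∑ α, mlt d α * u q α * u q α = -1) (i j : Fin d) :
    Gc d κ (rVar d κ ϱ q) (vVar d κ ϱ u q) i j
      = κ * (1 + ϱ q ^ κ) / (a0c d κ (rVar d κ ϱ q) (vVar d κ ϱ u q) * fκ κ (ϱ q) * u q 0)
        * ((if i = j then 1 else 0) - u q i.succ * u q j.succ / u q 0 ^ 2) := by
  have hf := (fκ_pos (κ := κ) hρ).ne'
  rw [Gc, v0_rVar_vVar hκ hρ hU0.le hunit, brk_rVar hκ, vVar, vVar]
  field_simp

end GoodVariables

section Derivatives

variable {d : ℕ} {κ : ℝ} {ϱ : (Fin (d + 1) → ℝ) → ℝ} {u : (Fin (d + 1) → ℝ) → Fin (d + 1) → ℝ}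
  {q : Fin (d + 1) → ℝ} {μ : Fin (d + 1)}

lemma pder_rVar (hκ : κ ≠ 0) (hρ : 0 < ϱ q) (hϱ : DifferentiableAt ℝ ϱ q) :
    pder d μ (rVar d κ ϱ) q = (1 + κ) * ϱ q ^ κ / ϱ q * pder d μ ϱ q := by
  have h : HasDerivAt (fun y => (1 + κ) / κ * y ^ κ) ((1 + κ) / κ * (κ * ϱ q ^ (κ - 1))) (ϱ q) :=
    (Real.hasDerivAt_rpow_const (Or.inl hρ.ne')).const_mul _
  refine (pder_comp h hϱ).trans ?_
  rw [Real.rpow_sub_one hρ.ne']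
  field_simp

lemma pder_rpow_add_one (hρ : 0 < ϱ q) (hϱ : DifferentiableAt ℝ ϱ q) :
    pder d μ (fun z => ϱ z ^ (κ + 1)) q = (κ + 1) * ϱ q ^ κ * pder d μ ϱ q := by
  rw [pder_comp (Real.hasDerivAt_rpow_const (Or.inl hρ.ne')) hϱ, add_sub_cancel_right]

lemma pder_fκ_mul (hκ : κ ≠ 0) (hρ : 0 < ϱ q) (hϱ : DifferentiableAt ℝ ϱ q) {α : Fin (d + 1)}
    (hu : DifferentiableAt ℝ (fun z => u z α) q) :
    pder d μ (fun z => fκ κ (ϱ z) * u z α) q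
      = fκ κ (ϱ q) * (pder d μ (fun z => u z α) q
        + (κ + 1) * ϱ q ^ κ / (ϱ q * (1 + ϱ q ^ κ)) * u q α * pder d μ ϱ q) := by
  have hf : DifferentiableAt ℝ (fun z => fκ κ (ϱ z)) q :=
    (hasDerivAt_fκ hκ hρ).differentiableAt.comp q hϱ
  rw [pder_mul hf hu, pder_comp (hasDerivAt_fκ hκ hρ) hϱ]
  ring

lemma sum_mul_pder_fκ_mul (hκ : κ ≠ 0) (hρ : 0 < ϱ q) (hϱ : DifferentiableAt ℝ ϱ q)
    {α : Fin (d + 1)} (hu : DifferentiableAt ℝ (fun z => u z α) q) (a : Fin (d + 1) → ℝ) :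
    ∑ μ, a μ * pder d μ (fun z => fκ κ (ϱ z) * u z α) q
      = fκ κ (ϱ q) * (∑ μ, a μ * pder d μ (fun z => u z α) q
        + (κ + 1) * ϱ q ^ κ / (ϱ q * (1 + ϱ q ^ κ)) * u q α * ∑ μ, a μ * pder d μ ϱ q) := by
  rw [Finset.mul_sum, ← Finset.sum_add_distrib, Finset.mul_sum]
  exact Finset.sum_congr rfl fun μ _ => by rw [pder_fκ_mul hκ hρ hϱ hu]; ring

end Derivatives

def eulerMassResidual (d : ℕ) (peos : ℝ → ℝ) (ϱ : (Fin (d + 1) → ℝ) → ℝ)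
    (u : (Fin (d + 1) → ℝ) → Fin (d + 1) → ℝ) (q : Fin (d + 1) → ℝ) : ℝ :=
  (∑ μ, u q μ * pder d μ ϱ q) + (peos (ϱ q) + ϱ q) * ∑ μ, pder d μ (fun z => u z μ) q

def eulerMomentumResidual (d : ℕ) (peos : ℝ → ℝ) (ϱ : (Fin (d + 1) → ℝ) → ℝ)
    (u : (Fin (d + 1) → ℝ) → Fin (d + 1) → ℝ) (q : Fin (d + 1) → ℝ) (α : Fin (d + 1)) : ℝ :=
  (peos (ϱ q) + ϱ q) * (∑ μ, u q μ * pder d μ (fun z => mlt d α * u z α) q)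
    + pder d α (fun z => peos (ϱ z)) q
    + mlt d α * u q α * ∑ μ, u q μ * pder d μ (fun z => peos (ϱ z)) q

section EulerResiduals

variable {d : ℕ} {κ : ℝ} {ϱ : (Fin (d + 1) → ℝ) → ℝ} {u : (Fin (d + 1) → ℝ) → Fin (d + 1) → ℝ}
  {q : Fin (d + 1) → ℝ}

lemma relEuler_iff {peos : ℝ → ℝ} {O : Set (Fin (d + 1) → ℝ)} :
    RelEuler d peos O ϱ u ↔ ∀ q ∈ O,
      eulerMassResidual d peos ϱ u q = 0 ∧ ∀ α, eulerMomentumResidual d peos ϱ u q α = 0 :=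
  Iff.rfl

lemma eulerMassResidual_powerLaw (hρ : 0 < ϱ q) :
    eulerMassResidual d (fun y => y ^ (κ + 1)) ϱ u q
      = (∑ μ, u q μ * pder d μ ϱ q)
        + ϱ q * (1 + ϱ q ^ κ) * ∑ μ, pder d μ (fun z => u z μ) q := by
  rw [eulerMassResidual, Real.rpow_add hρ, Real.rpow_one]
  ring

lemma eulerMomentumResidual_powerLaw (hρ : 0 < ϱ q) (hϱ : DifferentiableAt ℝ ϱ q)
    {α : Fin (d + 1)} (hu : DifferentiableAt ℝ (fun z => u z α) q) :
    eulerMomentumResidual d (fun y => y ^ (κ + 1)) ϱ u q α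
      = ϱ q * (1 + ϱ q ^ κ) * mlt d α * (∑ μ, u q μ * pder d μ (fun z => u z α) q)
        + (κ + 1) * ϱ q ^ κ * (pder d α ϱ q + mlt d α * u q α * ∑ μ, u q μ * pder d μ ϱ q) := by
  simp only [eulerMomentumResidual, pder_const_mul _ hu, pder_rpow_add_one hρ hϱ,
    mul_left_comm (u q _), ← Finset.mul_sum]
  rw [Real.rpow_add hρ, Real.rpow_one]
  ring

end EulerResiduals

section GoodSystem

variable {d : ℕ} {κ : ℝ} {ϱ : (Fin (d + 1) → ℝ) → ℝ} {u : (Fin (d + 1) → ℝ) → Fin (d + 1) → ℝ}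
  {q : Fin (d + 1) → ℝ}

lemma goodVelocity_lhs_eq_mul_eulerMomentumResidual (hκ : 0 < κ) (hρ : 0 < ϱ q) (hU0 : 0 < u q 0)
    (hunit : ∑ α, mlt d α * u q α * u q α = -1) (hϱ : DifferentiableAt ℝ ϱ q)
    (hu : ∀ α, DifferentiableAt ℝ (fun z => u z α) q) (i : Fin d) :
    pder d 0 (fun z => fκ κ (ϱ z) * u z i.succ) q
      + (∑ l : Fin d, (vVar d κ ϱ u q l / v0 d κ (rVar d κ ϱ q) (vVar d κ ϱ u q))
          * pder d l.succ (fun z => fκ κ (ϱ z) * u z i.succ) q)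
      + a2c d κ (rVar d κ ϱ q) (vVar d κ ϱ u q) * pder d i.succ (rVar d κ ϱ) q
    = fκ κ (ϱ q) / (ϱ q * (1 + ϱ q ^ κ) * u q 0)
        * eulerMomentumResidual d (fun y => y ^ (κ + 1)) ϱ u q i.succ := by
  simp only [vVar_div_v0 hκ hρ.le hU0 hunit]
  rw [pder_zero_add_sum_div_mul _ hU0.ne', sum_mul_pder_fκ_mul hκ.ne' hρ hϱ (hu _),
    a2c_rVar_vVar hκ hρ.le hU0 hunit, pder_rVar hκ.ne' hρ hϱ,
    eulerMomentumResidual_powerLaw hρ hϱ (hu _), mlt_succ]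
  field_simp
  ring

lemma sum_sum_ite_sub_mul (a : Fin d → ℝ) (s : ℝ) (X : Fin d → Fin d → ℝ) :
    ∑ i, ∑ j, ((if i = j then 1 else 0) - a i * a j / s) * X i j
      = ∑ i, X i i - (∑ i, a i * ∑ j, a j * X i j) / s := by
  simp only [sub_mul, ite_mul, one_mul, zero_mul, Finset.sum_sub_distrib, Finset.sum_ite_eq,
    Finset.mem_univ, if_true, Finset.sum_div, Finset.mul_sum]
  congr 1
  exact Finset.sum_congr rfl fun i _ => Finset.sum_congr rfl fun j _ => by ring

lemma sum_succ_mul_pder_fκ_mul (hκ : 0 < κ) (hρ : 0 < ϱ q)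
    (hunit : ∀ᶠ z in 𝓝 q, ∑ α, mlt d α * u z α * u z α = -1) (hϱ : DifferentiableAt ℝ ϱ q)
    (hu : ∀ α, DifferentiableAt ℝ (fun z => u z α) q) (μ : Fin (d + 1)) :
    ∑ j : Fin d, u q j.succ * pder d μ (fun z => fκ κ (ϱ z) * u z j.succ) q
      = fκ κ (ϱ q) * (u q 0 * pder d μ (fun z => u z 0) q
        + (κ + 1) * ϱ q ^ κ / (ϱ q * (1 + ϱ q ^ κ)) * (u q 0 ^ 2 - 1) * pder d μ ϱ q) := by
  simp only [pder_fκ_mul hκ.ne' hρ hϱ (hu _)]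
  rw [← sum_mul_pder_succ_of_unit hu hunit, ← sum_sq_succ_of_unit hunit.self_of_nhds,
    Finset.mul_sum, Finset.sum_mul, ← Finset.sum_add_distrib, Finset.mul_sum]
  exact Finset.sum_congr rfl fun j _ => by ring

lemma sum_sum_Gc_mul_pder (hκ : 0 < κ) (hρ : 0 < ϱ q) (hU0 : 0 < u q 0)
    (hunit : ∀ᶠ z in 𝓝 q, ∑ α, mlt d α * u z α * u z α = -1) (hϱ : DifferentiableAt ℝ ϱ q)
    (hu : ∀ α, DifferentiableAt ℝ (fun z => u z α) q) :
    ∑ i, ∑ j, Gc d κ (rVar d κ ϱ q) (vVar d κ ϱ u q) i j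
        * pder d i.succ (fun z => fκ κ (ϱ z) * u z j.succ) q
      = κ * (1 + ϱ q ^ κ) / (a0c d κ (rVar d κ ϱ q) (vVar d κ ϱ u q) * u q 0)
        * (∑ i : Fin d, pder d i.succ (fun z => u z i.succ) q
          + (κ + 1) * ϱ q ^ κ / (ϱ q * (1 + ϱ q ^ κ)) / u q 0 ^ 2
            * ∑ i : Fin d, u q i.succ * pder d i.succ ϱ q
          - (∑ i : Fin d, u q i.succ * pder d i.succ (fun z => u z 0) q) / u q 0) := by
  have hf := (fκ_pos (κ := κ) hρ.le).ne'
  have hdiag : ∑ i : Fin d, pder d i.succ (fun z => fκ κ (ϱ z) * u z i.succ) q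
      = fκ κ (ϱ q) * (∑ i : Fin d, pder d i.succ (fun z => u z i.succ) q
        + (κ + 1) * ϱ q ^ κ / (ϱ q * (1 + ϱ q ^ κ))
          * ∑ i : Fin d, u q i.succ * pder d i.succ ϱ q) := by
    simp only [pder_fκ_mul hκ.ne' hρ hϱ (hu _), mul_add, Finset.sum_add_distrib, Finset.mul_sum]
    exact congrArg _ (Finset.sum_congr rfl fun i _ => by ring)
  have hoff : ∑ i : Fin d, u q i.succ * ∑ j : Fin d,
        u q j.succ * pder d i.succ (fun z => fκ κ (ϱ z) * u z j.succ) q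
      = fκ κ (ϱ q) * (u q 0 * ∑ i : Fin d, u q i.succ * pder d i.succ (fun z => u z 0) q
        + (κ + 1) * ϱ q ^ κ / (ϱ q * (1 + ϱ q ^ κ)) * (u q 0 ^ 2 - 1)
          * ∑ i : Fin d, u q i.succ * pder d i.succ ϱ q) := by
    simp only [sum_succ_mul_pder_fκ_mul hκ hρ hunit hϱ hu, mul_add, Finset.sum_add_distrib,
      Finset.mul_sum]
    congr 1 <;> exact Finset.sum_congr rfl fun i _ => by ring
  simp only [Gc_rVar_vVar hκ hρ.le hU0 hunit.self_of_nhds, mul_assoc, ← Finset.mul_sum]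
  rw [sum_sum_ite_sub_mul (fun i => u q i.succ), hdiag, hoff]
  field_simp
  ring

lemma goodDensity_lhs_eq_mul_eulerResiduals (hκ : 0 < κ) (hρ : 0 < ϱ q) (hU0 : 0 < u q 0)
    (hunit : ∀ᶠ z in 𝓝 q, ∑ α, mlt d α * u z α * u z α = -1) (hϱ : DifferentiableAt ℝ ϱ q)
    (hu : ∀ α, DifferentiableAt ℝ (fun z => u z α) q)
    (ha0 : a0c d κ (rVar d κ ϱ q) (vVar d κ ϱ u q) ≠ 0) :
    pder d 0 (rVar d κ ϱ) q
      + (∑ i : Fin d, (vVar d κ ϱ u q i / v0 d κ (rVar d κ ϱ q) (vVar d κ ϱ u q))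
          * pder d i.succ (rVar d κ ϱ) q)
      + rVar d κ ϱ q * ∑ i, ∑ j, Gc d κ (rVar d κ ϱ q) (vVar d κ ϱ u q) i j
          * pder d i.succ (fun z => fκ κ (ϱ z) * u z j.succ) q
      + rVar d κ ϱ q * a1c d κ (rVar d κ ϱ q) (vVar d κ ϱ u q)
          * ∑ i, vVar d κ ϱ u q i * pder d i.succ (rVar d κ ϱ) q
    = (κ + 1) * ϱ q ^ κ / (ϱ q * u q 0 ^ 2 * a0c d κ (rVar d κ ϱ q) (vVar d κ ϱ u q))
        * (u q 0 * eulerMassResidual d (fun y => y ^ (κ + 1)) ϱ u q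
          + eulerMomentumResidual d (fun y => y ^ (κ + 1)) ϱ u q 0) := by
  have hunit_q := hunit.self_of_nhds
  set S := ∑ i : Fin d, u q i.succ * pder d i.succ ϱ q
  have hDr : ∑ μ, u q μ * pder d μ (rVar d κ ϱ) q
      = (1 + κ) * ϱ q ^ κ / ϱ q * (u q 0 * pder d 0 ϱ q + S) := by
    simp only [pder_rVar hκ.ne' hρ hϱ, Fin.sum_univ_succ, S, mul_add, Finset.mul_sum]
    exact congrArg₂ _ (by ring) (Finset.sum_congr rfl fun i _ => by ring)
  have hvr : ∑ i, vVar d κ ϱ u q i * pder d i.succ (rVar d κ ϱ) q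
      = fκ κ (ϱ q) * ((1 + κ) * ϱ q ^ κ / ϱ q) * S := by
    simp only [pder_rVar hκ.ne' hρ hϱ, vVar, S, Finset.mul_sum]
    exact Finset.sum_congr rfl fun i _ => by ring
  have hA : a0c d κ (rVar d κ ϱ q) (vVar d κ ϱ u q) * u q 0 ^ 2
      = u q 0 ^ 2 - (κ + 1) * ϱ q ^ κ * (u q 0 ^ 2 - 1) := by
    rw [a0c_rVar_vVar hκ hρ.le hU0 hunit_q]
    field_simp
  have hf := (fκ_pos (κ := κ) hρ.le).ne'
  simp only [vVar_div_v0 hκ hρ.le hU0 hunit_q]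
  rw [pder_zero_add_sum_div_mul _ hU0.ne', hDr, sum_sum_Gc_mul_pder hκ hρ hU0 hunit hϱ hu, hvr,
    a1c_rVar_vVar hκ hρ.le hU0 hunit_q, eulerMassResidual_powerLaw hρ,
    eulerMomentumResidual_powerLaw hρ hϱ (hu 0), mlt_zero]
  set A := a0c d κ (rVar d κ ϱ q) (vVar d κ ϱ u q)
  rw [rVar]
  simp only [Fin.sum_univ_succ, S]
  field_simp
  linear_combination (κ + 1) * (u q 0 * pder d 0 ϱ q
    + ∑ i : Fin d, u q i.succ * pder d i.succ ϱ q) * hA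

end GoodSystem

theorem good_variable_system_derivation_general
    (d : ℕ) (κ : ℝ) (hκ : 0 < κ)
    (O : Set (Fin (d + 1) → ℝ)) (hO : IsOpen O)
    (ϱ : (Fin (d + 1) → ℝ) → ℝ) (u : (Fin (d + 1) → ℝ) → Fin (d + 1) → ℝ)
    (hϱ : ContDiffOn ℝ 1 ϱ O) (hu : ContDiffOn ℝ 1 u O)
    (hϱpos : ∀ q ∈ O, 0 < ϱ q)
    (hu0 : ∀ q ∈ O, 0 < u q 0)
    (hnorm : ∀ q ∈ O, ∑ α, mlt d α * u q α * u q α = -1)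
    (hcs : ∀ q ∈ O, (κ + 1) * ϱ q ^ (κ : ℝ) < 1)
    (heuler : RelEuler d (fun y => y ^ (κ + 1 : ℝ)) O ϱ u) :
    ∀ q ∈ O,
      (pder d 0 (rVar d κ ϱ) q
        + (∑ i : Fin d, (vVar d κ ϱ u q i / v0 d κ (rVar d κ ϱ q) (vVar d κ ϱ u q))
            * pder d i.succ (rVar d κ ϱ) q)
        + rVar d κ ϱ q * ∑ i, ∑ j, Gc d κ (rVar d κ ϱ q) (vVar d κ ϱ u q) i j
            * pder d i.succ (fun z => fκ κ (ϱ z) * u z j.succ) q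
        + rVar d κ ϱ q * a1c d κ (rVar d κ ϱ q) (vVar d κ ϱ u q)
            * ∑ i, vVar d κ ϱ u q i * pder d i.succ (rVar d κ ϱ) q = 0) ∧
      (∀ i : Fin d,
        pder d 0 (fun z => fκ κ (ϱ z) * u z i.succ) q
          + (∑ l : Fin d, (vVar d κ ϱ u q l / v0 d κ (rVar d κ ϱ q) (vVar d κ ϱ u q))
              * pder d l.succ (fun z => fκ κ (ϱ z) * u z i.succ) q)
          + a2c d κ (rVar d κ ϱ q) (vVar d κ ϱ u q) * pder d i.succ (rVar d κ ϱ) q = 0) ∧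
      v0 d κ (rVar d κ ϱ q) (vVar d κ ϱ u q) = fκ κ (ϱ q) * u q 0 := by
  intro q hq
  have hρ := hϱpos q hq
  have hU0 := hu0 q hq
  have hOq : O ∈ 𝓝 q := hO.mem_nhds hq
  have hϱq : DifferentiableAt ℝ ϱ q := (hϱ.differentiableOn one_ne_zero).differentiableAt hOq
  have huq : ∀ α, DifferentiableAt ℝ (fun z => u z α) q :=
    differentiableAt_pi.mp ((hu.differentiableOn one_ne_zero).differentiableAt hOq)
  have hunit : ∀ᶠ z in 𝓝 q, ∑ α, mlt d α * u z α * u z α = -1 := eventually_of_mem hOq hnorm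
  have ha0 := a0c_rVar_vVar_pos hκ hρ.le hU0 (hnorm q hq) (hcs q hq)
  obtain ⟨hmass, hmom⟩ := relEuler_iff.mp heuler q hq
  refine ⟨?_, fun i => ?_, v0_rVar_vVar hκ hρ.le hU0.le (hnorm q hq)⟩
  · rw [goodDensity_lhs_eq_mul_eulerResiduals hκ hρ hU0 hunit hϱq huq ha0.ne', hmass, hmom,
      mul_zero, add_zero, mul_zero]
  · rw [goodVelocity_lhs_eq_mul_eulerMomentumResidual hκ hρ hU0 (hnorm q hq) hϱq huq, hmom,
      mul_zero]

/-- **Derivation of the good-variable system** (equations (1.19)): for the power-law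
equation of state `p(ϱ) = ϱ^{κ+1}` with `c_s² = (κ+1)ϱ^κ < 1`, the good variables
`r = ((1+κ)/κ)ϱ^κ`, `v = f(ϱ)u` satisfy
`D_t r + r G^{ij} ∂_i v_j + r a₁ v^i ∂_i r = 0`, `D_t v_i + a₂ ∂_i r = 0`, and
`v⁰ = f(ϱ)u⁰`. -/
theorem good_variable_system_derivation
    (d : ℕ) (hd : 1 ≤ d) (κ : ℝ) (hκ : 0 < κ)
    (O : Set (Fin (d + 1) → ℝ)) (hO : IsOpen O)
    (ϱ : (Fin (d + 1) → ℝ) → ℝ) (u : (Fin (d + 1) → ℝ) → Fin (d + 1) → ℝ)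
    (hϱ : ContDiffOn ℝ 1 ϱ O) (hu : ContDiffOn ℝ 1 u O)
    (hϱpos : ∀ q ∈ O, 0 < ϱ q)
    (hu0 : ∀ q ∈ O, 0 < u q 0)
    (hnorm : ∀ q ∈ O, ∑ α, mlt d α * u q α * u q α = -1)
    (hcs : ∀ q ∈ O, (κ + 1) * ϱ q ^ (κ : ℝ) < 1)
    (heuler : RelEuler d (fun y => y ^ (κ + 1 : ℝ)) O ϱ u) :
    ∀ q ∈ O,
      (pder d 0 (rVar d κ ϱ) q
        + (∑ i : Fin d, (vVar d κ ϱ u q i / v0 d κ (rVar d κ ϱ q) (vVar d κ ϱ u q))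
            * pder d i.succ (rVar d κ ϱ) q)
        + rVar d κ ϱ q * ∑ i, ∑ j, Gc d κ (rVar d κ ϱ q) (vVar d κ ϱ u q) i j
            * pder d i.succ (fun z => fκ κ (ϱ z) * u z j.succ) q
        + rVar d κ ϱ q * a1c d κ (rVar d κ ϱ q) (vVar d κ ϱ u q)
            * ∑ i, vVar d κ ϱ u q i * pder d i.succ (rVar d κ ϱ) q = 0) ∧
      (∀ i : Fin d,
        pder d 0 (fun z => fκ κ (ϱ z) * u z i.succ) q
          + (∑ l : Fin d, (vVar d κ ϱ u q l / v0 d κ (rVar d κ ϱ q) (vVar d κ ϱ u q))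
              * pder d l.succ (fun z => fκ κ (ϱ z) * u z i.succ) q)
          + a2c d κ (rVar d κ ϱ q) (vVar d κ ϱ u q) * pder d i.succ (rVar d κ ϱ) q = 0) ∧
      v0 d κ (rVar d κ ϱ q) (vVar d κ ϱ u q) = fκ κ (ϱ q) * u q 0 :=
  good_variable_system_derivation_general d κ hκ O hO ϱ u hϱ hu hϱpos hu0 hnorm hcs heuler
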